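/- arXiv:1211.1809 — 5 statements merged into one kernel-verified Lean document; each statement's English description precedes it below -/
import Mathlib

section
/- Let E be a seminormed real vector space, let τ > 0, T > 0, let N ≥ 1 with Nτ ≤ T, and let v^0, v^1, …, v^N ∈ E. For 1 ≤ m ≤ N set v̄^{m-1/2} = (v^{m-1} + v^m)/2. Then for every 1 ≤ n ≤ N one has τ‖v^n‖ ≤ 2√T · ( ∑_{m=1}^n τ‖v̄^{m-1/2}‖² )^{1/2} + τ‖v^0‖. -/
/-!
Since `v m = (v (m - 1) + v m) - v (m - 1)`, induction bounds `‖v n‖` by `‖v 0‖` plus twice the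
sum of the midpoint norms. Cauchy–Schwarz turns `τ` times that sum into
`√(nτ)` times the discrete `L²` norm of the midpoints, and `nτ ≤ T`.
-/

open Finset

theorem norm_le_sum_norm_add_pred_add_norm_zero {E : Type*} [SeminormedAddCommGroup E]
    (v : ℕ → E) (n : ℕ) : ‖v n‖ ≤ ∑ m ∈ Icc 1 n, ‖v (m - 1) + v m‖ + ‖v 0‖ := by
  induction n with
  | zero => simp
  | succ k ih =>
    have step : ‖v (k + 1)‖ ≤ ‖v k + v (k + 1)‖ + ‖v k‖ := by
      simpa using norm_sub_le (v k + v (k + 1)) (v k)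
    rw [sum_Icc_succ_top (by omega), Nat.add_sub_cancel]
    linarith

theorem norm_le_two_mul_sum_norm_midpoint_add_norm_zero {E : Type*} [SeminormedAddCommGroup E]
    [NormedSpace ℝ E] (v : ℕ → E) (n : ℕ) :
    ‖v n‖ ≤ 2 * ∑ m ∈ Icc 1 n, ‖(2 : ℝ)⁻¹ • (v (m - 1) + v m)‖ + ‖v 0‖ := by
  have hmid : ∀ m, ‖v (m - 1) + v m‖ = 2 * ‖(2 : ℝ)⁻¹ • (v (m - 1) + v m)‖ := by
    intro m
    rw [norm_smul, Real.norm_of_nonneg (by norm_num)]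
    ring
  simpa only [hmid, ← mul_sum] using norm_le_sum_norm_add_pred_add_norm_zero v n

theorem mul_sum_le_sqrt_card_mul_mul_sqrt_sum_mul_sq {ι : Type*} (s : Finset ι) (b : ι → ℝ)
    {τ : ℝ} (hτ : 0 ≤ τ) :
    τ * ∑ i ∈ s, b i ≤ √(#s * τ) * √(∑ i ∈ s, τ * b i ^ 2) := by
  rw [← Real.sqrt_mul (by positivity)]
  refine (le_abs_self _).trans (Real.abs_le_sqrt ?_)
  calc (τ * ∑ i ∈ s, b i) ^ 2 = τ ^ 2 * (∑ i ∈ s, b i) ^ 2 := by ring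
    _ ≤ τ ^ 2 * (#s * ∑ i ∈ s, b i ^ 2) := by gcongr; exact sq_sum_le_card_mul_sum_sq
    _ = #s * τ * ∑ i ∈ s, τ * b i ^ 2 := by rw [← mul_sum]; ring

theorem stmt_1_general {E : Type*} [SeminormedAddCommGroup E] [NormedSpace ℝ E]
    (τ T : ℝ) (hτ : 0 < τ) (N : ℕ) (hNT : N * τ ≤ T)
    (v : ℕ → E) :
    ∀ n, 1 ≤ n → n ≤ N →
      τ * ‖v n‖ ≤
        2 * Real.sqrt T *
            Real.sqrt (∑ m ∈ Finset.Icc 1 n, τ * ‖(2 : ℝ)⁻¹ • (v (m - 1) + v m)‖ ^ 2) +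
          τ * ‖v 0‖ := by
  intro n _ hnN
  set b : ℕ → ℝ := fun m => ‖(2 : ℝ)⁻¹ • (v (m - 1) + v m)‖
  have hnT : √(#(Icc 1 n) * τ) ≤ √T := by
    refine Real.sqrt_le_sqrt (le_trans ?_ hNT)
    gcongr
    simpa using hnN
  calc τ * ‖v n‖ ≤ τ * (2 * ∑ m ∈ Icc 1 n, b m + ‖v 0‖) :=
        mul_le_mul_of_nonneg_left (norm_le_two_mul_sum_norm_midpoint_add_norm_zero v n) hτ.le
    _ = 2 * (τ * ∑ m ∈ Icc 1 n, b m) + τ * ‖v 0‖ := by ring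
    _ ≤ 2 * (√(#(Icc 1 n) * τ) * √(∑ m ∈ Icc 1 n, τ * b m ^ 2)) + τ * ‖v 0‖ := by
        gcongr 2 * ?_ + _
        exact mul_sum_le_sqrt_card_mul_mul_sqrt_sum_mul_sq _ b hτ.le
    _ ≤ 2 * √T * √(∑ m ∈ Icc 1 n, τ * b m ^ 2) + τ * ‖v 0‖ := by
        rw [← mul_assoc]; gcongr

theorem stmt_1 {E : Type*} [SeminormedAddCommGroup E] [NormedSpace ℝ E]
    (τ T : ℝ) (hτ : 0 < τ) (hT : 0 < T) (N : ℕ) (hN : 1 ≤ N) (hNT : N * τ ≤ T)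
    (v : ℕ → E) :
    ∀ n, 1 ≤ n → n ≤ N →
      τ * ‖v n‖ ≤
        2 * Real.sqrt T *
            Real.sqrt (∑ m ∈ Finset.Icc 1 n, τ * ‖(2 : ℝ)⁻¹ • (v (m - 1) + v m)‖ ^ 2) +
          τ * ‖v 0‖ :=
  stmt_1_general τ T hτ N hNT v
end

section
/- Let τ > 0, C ≥ 0, B ≥ 0 with Cτ ≤ 1/2, let N ≥ 1, and let a_0, a_1, …, a_N be nonnegative real numbers satisfying a_{n+1} ≤ a_n + Cτ(a_{n+1} + a_n + a_{n-1}) + B for all 1 ≤ n ≤ N−1. Then for every 0 ≤ n ≤ N one has a_n ≤ exp(6Cτn) · ( max(a_0, a_1) + 3nB ). -/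
/-!
Solving the implicit step for `a (n + 1)` costs a factor `1 / (1 - Cτ) ≤ 1 + 2Cτ` (as `Cτ ≤ 1/2`),
so each step multiplies the larger of the two previous values by at most `1 + 6Cτ ≤ exp (6Cτ)`
and adds at most `3B`. The envelope `exp (6Cτ n) (M + 3nB)` is increasing in `n` and absorbs
exactly such a step, which gives the bound by two-step induction.
-/

open Real

lemma le_exp_mul_max_add_of_le_add_mul_add {c B x y z : ℝ} (hc : 0 ≤ c) (hc2 : c ≤ 1 / 2)
    (hB : 0 ≤ B) (hy : 0 ≤ y) (h : x ≤ y + c * (x + y + z) + B) :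
    x ≤ exp (6 * c) * max y z + 2 * B := by
  set m := max y z
  have hm : 0 ≤ m := hy.trans (le_max_left y z)
  have hym : y ≤ m := le_max_left y z
  have hzm : z ≤ m := le_max_right y z
  have implicit : (1 - c) * x ≤ (1 + 2 * c) * m + B := by
    nlinarith [mul_le_mul_of_nonneg_left hym hc, mul_le_mul_of_nonneg_left hzm hc]
  -- `(1 + 2c) / (1 - c) ≤ 1 + 6c` is exactly `c ≤ 1/2`.
  have explicit : x ≤ (1 + 6 * c) * m + 2 * B := by
    have hcm : 0 ≤ c * (1 - 2 * c) * m := by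
      have : 0 ≤ 1 - 2 * c := by linarith
      positivity
    nlinarith
  have hexp : 1 + 6 * c ≤ exp (6 * c) := by linarith [add_one_le_exp (6 * c)]
  linarith [mul_le_mul_of_nonneg_right hexp hm]

noncomputable def expEnvelope (l b M : ℝ) (n : ℕ) : ℝ := exp (l * n) * (M + n * b)

section expEnvelope

variable {l b M : ℝ}

lemma expEnvelope_zero : expEnvelope l b M 0 = M := by simp [expEnvelope]

lemma expEnvelope_mono (hl : 0 ≤ l) (hb : 0 ≤ b) (hM : 0 ≤ M) :
    Monotone (expEnvelope l b M) := by
  intro m n hmn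
  have hmn' : (m : ℝ) ≤ n := by exact_mod_cast hmn
  unfold expEnvelope
  gcongr

lemma exp_mul_expEnvelope_add_le_succ (hl : 0 ≤ l) (hb : 0 ≤ b) (n : ℕ) :
    exp l * expEnvelope l b M n + b ≤ expEnvelope l b M (n + 1) := by
  have h1 : 1 ≤ exp (l * (n + 1)) := one_le_exp (by positivity)
  unfold expEnvelope
  push_cast
  calc exp l * (exp (l * n) * (M + n * b)) + b
      = exp (l * (n + 1)) * (M + n * b) + b := by rw [← mul_assoc, ← exp_add]; ring_nf
    _ ≤ exp (l * (n + 1)) * (M + n * b) + exp (l * (n + 1)) * b := by nlinarith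
    _ = exp (l * (n + 1)) * (M + (n + 1) * b) := by ring

theorem le_expEnvelope_of_two_step {u : ℕ → ℝ} {N : ℕ} (hl : 0 ≤ l) (hb : 0 ≤ b) (hM : 0 ≤ M)
    (h0 : u 0 ≤ M) (h1 : u 1 ≤ M)
    (hstep : ∀ n, n + 2 ≤ N → u (n + 2) ≤ exp l * max (u (n + 1)) (u n) + b) :
    ∀ n ≤ N, u n ≤ expEnvelope l b M n := by
  have mono := expEnvelope_mono hl hb hM
  intro n
  induction n using Nat.strong_induction_on with
  | _ n ih =>
    intro hn
    match n with
    | 0 => rwa [expEnvelope_zero]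
    | 1 => exact h1.trans (by simpa only [expEnvelope_zero] using mono zero_le_one)
    | k + 2 =>
      have hmax : max (u (k + 1)) (u k) ≤ expEnvelope l b M (k + 1) :=
        max_le (ih (k + 1) (by omega) (by omega))
          ((ih k (by omega) (by omega)).trans (mono k.le_succ))
      calc u (k + 2) ≤ exp l * max (u (k + 1)) (u k) + b := hstep k hn
        _ ≤ exp l * expEnvelope l b M (k + 1) + b := by gcongr
        _ ≤ expEnvelope l b M (k + 2) := exp_mul_expEnvelope_add_le_succ hl hb (k + 1)

end expEnvelope

theorem stmt_2_general (τ C B : ℝ) (hτ : 0 < τ) (hC : 0 ≤ C) (hB : 0 ≤ B)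
    (hCτ : C * τ ≤ 1 / 2) (N : ℕ) (a : ℕ → ℝ)
    (ha : ∀ n, n ≤ N → 0 ≤ a n)
    (hrec : ∀ n, 1 ≤ n → n ≤ N - 1 →
      a (n + 1) ≤ a n + C * τ * (a (n + 1) + a n + a (n - 1)) + B) :
    ∀ n, n ≤ N →
      a n ≤ Real.exp (6 * C * τ * n) * (max (a 0) (a 1) + 3 * n * B) := by
  have hstep : ∀ n, n + 2 ≤ N →
      a (n + 2) ≤ exp (6 * C * τ) * max (a (n + 1)) (a n) + 3 * B := by
    intro n hn
    have hrec' := hrec (n + 1) (by omega) (by omega)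
    rw [Nat.add_sub_cancel] at hrec'
    have := le_exp_mul_max_add_of_le_add_mul_add (by positivity) hCτ hB
      (ha (n + 1) (by omega)) hrec'
    rw [mul_assoc 6]
    linarith
  intro n hn
  have hM : 0 ≤ max (a 0) (a 1) := (ha 0 (Nat.zero_le N)).trans (le_max_left _ _)
  have := le_expEnvelope_of_two_step (by positivity) (by positivity) hM
    (le_max_left _ _) (le_max_right _ _) hstep n hn
  rw [expEnvelope] at this
  linarith

theorem stmt_2 (τ C B : ℝ) (hτ : 0 < τ) (hC : 0 ≤ C) (hB : 0 ≤ B)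
    (hCτ : C * τ ≤ 1 / 2) (N : ℕ) (hN : 1 ≤ N) (a : ℕ → ℝ)
    (ha : ∀ n, n ≤ N → 0 ≤ a n)
    (hrec : ∀ n, 1 ≤ n → n ≤ N - 1 →
      a (n + 1) ≤ a n + C * τ * (a (n + 1) + a n + a (n - 1)) + B) :
    ∀ n, n ≤ N →
      a n ≤ Real.exp (6 * C * τ * n) * (max (a 0) (a 1) + 3 * n * B) :=
  stmt_2_general τ C B hτ hC hB hCτ N a ha hrec
end

section
/- Let E be a real Banach space, let τ > 0, N ≥ 1, T = Nτ, set t_n = nτ and t_{n+1/2} = (n + 1/2)τ, and let f : ℝ → E be three times continuously differentiable on [0, T]. Then ∑_{n=0}^{N−1} τ ‖ (f(t_{n+1}) − f(t_n))/τ − f'(t_{n+1/2}) ‖² ≤ (τ⁴/64) · ∫_0^T ‖f'''(s)‖² ds. -/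
/-!
On a cell `[a, b]` with midpoint `m`, expanding `f` about `m` to second order with integral
remainder, at `b` and at `a`, writes `f b - f a - (b - a) f'(m)` as an integral of `f'''` against
a kernel bounded by `(b - a)² / 8`; the second-order terms cancel by symmetry. Cauchy–Schwarz
turns this `L¹` bound on the cell into the `L²` bound, and the cells of the partition add up to
`[0, T]`.
-/

open Set MeasureTheory

theorem sq_intervalIntegral_le_mul {a b : ℝ} (hab : a ≤ b) {φ : ℝ → ℝ}
    (hφ : IntervalIntegrable φ volume a b)
    (hφ2 : IntervalIntegrable (fun t ↦ φ t ^ 2) volume a b) :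
    (∫ t in a..b, φ t) ^ 2 ≤ (b - a) * ∫ t in a..b, φ t ^ 2 := by
  set I := ∫ t in a..b, φ t
  set J := ∫ t in a..b, φ t ^ 2
  have hexpand : ∫ t in a..b, ((b - a) * φ t - I) ^ 2 = (b - a) * ((b - a) * J - I ^ 2) := by
    have hsq : ∀ t, ((b - a) * φ t - I) ^ 2 =
        (b - a) ^ 2 * φ t ^ 2 - (2 * (b - a) * I) * φ t + I ^ 2 := fun t ↦ by ring
    simp_rw [hsq]
    rw [intervalIntegral.integral_add ((hφ2.const_mul _).sub (hφ.const_mul _))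
        intervalIntegrable_const,
      intervalIntegral.integral_sub (hφ2.const_mul _) (hφ.const_mul _),
      intervalIntegral.integral_const_mul, intervalIntegral.integral_const_mul,
      intervalIntegral.integral_const, smul_eq_mul]
    ring
  have hnonneg : 0 ≤ ∫ t in a..b, ((b - a) * φ t - I) ^ 2 :=
    intervalIntegral.integral_nonneg hab fun _ _ ↦ sq_nonneg _
  rcases hab.eq_or_lt with rfl | hlt
  · simp [I]
  · rw [hexpand] at hnonneg
    nlinarith [sub_pos.2 hlt]

theorem iteratedDerivWithin_subset {𝕜 F : Type*} [NontriviallyNormedField 𝕜]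
    [NormedAddCommGroup F] [NormedSpace 𝕜 F] {f : 𝕜 → F} {s t : Set 𝕜} {n : ℕ} {x : 𝕜}
    (st : s ⊆ t) (hs : UniqueDiffOn 𝕜 s) (ht : UniqueDiffOn 𝕜 t) (hf : ContDiffOn 𝕜 n f t)
    (hx : x ∈ s) : iteratedDerivWithin n f s x = iteratedDerivWithin n f t x := by
  simp only [iteratedDerivWithin_eq_iteratedFDerivWithin,
    iteratedFDerivWithin_subset st hs ht hf hx]

section

variable {E : Type*} [NormedAddCommGroup E] [NormedSpace ℝ E]

theorem taylor_integral_remainder_two [CompleteSpace E] {f : ℝ → E} {s : Set ℝ}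
    (hs : UniqueDiffOn ℝ s) (hf : ContDiffOn ℝ 3 f s) {x₀ x : ℝ} (hsub : uIcc x₀ x ⊆ s) :
    f x - f x₀ - (x - x₀) • derivWithin f s x₀ - ((x - x₀) ^ 2 / 2) • iteratedDerivWithin 2 f s x₀ =
      ∫ t in x₀..x, ((x - t) ^ 2 / 2) • iteratedDerivWithin 3 f s t := by
  rcases eq_or_ne x₀ x with rfl | hne
  · simp
  have hu : UniqueDiffOn ℝ (uIcc x₀ x) := uniqueDiffOn_uIcc hne
  have hrestrict : ∀ k ≤ 3, ∀ t ∈ uIcc x₀ x,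
      iteratedDerivWithin k f (uIcc x₀ x) t = iteratedDerivWithin k f s t := fun k hk t ht ↦
    iteratedDerivWithin_subset hsub hu hs (hf.of_le (by exact_mod_cast hk)) ht
  have h := taylor_integral_remainder (n := 2) (hf.mono hsub)
  norm_num [Nat.factorial] at h
  rw [← iteratedDerivWithin_one, hrestrict 1 (by norm_num) x₀ left_mem_uIcc,
    hrestrict 2 (by norm_num) x₀ left_mem_uIcc,
    intervalIntegral.integral_congr (g := fun t ↦ ((x - t) ^ 2 / 2) • iteratedDerivWithin 3 f s t)
      fun t ht ↦ by simp only [hrestrict 3 le_rfl t ht]] at h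
  rw [← h, iteratedDerivWithin_one]
  module

theorem norm_intervalIntegral_smul_le {φ : ℝ → ℝ} {g : ℝ → E} {a b C : ℝ} (hab : a ≤ b)
    (hφ : ∀ t ∈ Ioc a b, |φ t| ≤ C) (hg : IntervalIntegrable (fun t ↦ ‖g t‖) volume a b) :
    ‖∫ t in a..b, φ t • g t‖ ≤ C * ∫ t in a..b, ‖g t‖ := by
  rw [← intervalIntegral.integral_const_mul]
  refine intervalIntegral.norm_integral_le_of_norm_le hab
    (Filter.Eventually.of_forall fun t ht ↦ ?_) (hg.const_mul C)
  rw [norm_smul, Real.norm_eq_abs]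
  exact mul_le_mul_of_nonneg_right (hφ t ht) (norm_nonneg _)

theorem norm_sub_sub_smul_derivWithin_midpoint_le [CompleteSpace E] {f : ℝ → E} {s : Set ℝ}
    (hs : UniqueDiffOn ℝ s) (hf : ContDiffOn ℝ 3 f s) {a b : ℝ} (hab : a ≤ b)
    (hsub : Icc a b ⊆ s) :
    ‖f b - f a - (b - a) • derivWithin f s ((a + b) / 2)‖ ≤
      (b - a) ^ 2 / 8 * ∫ t in a..b, ‖iteratedDerivWithin 3 f s t‖ := by
  set m := (a + b) / 2 with hm_def
  set f₃ := iteratedDerivWithin 3 f s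
  have ham : a ≤ m := by linarith
  have hmb : m ≤ b := by linarith
  have hm : m ∈ Icc a b := ⟨ham, hmb⟩
  have hint : ∀ {x y}, x ∈ Icc a b → y ∈ Icc a b →
      IntervalIntegrable (fun t ↦ ‖f₃ t‖) volume x y := fun hx hy ↦
    ((hf.continuousOn_iteratedDerivWithin le_rfl hs).norm.mono
      ((uIcc_subset_Icc hx hy).trans hsub)).intervalIntegrable
  have hright := taylor_integral_remainder_two hs hf
    ((uIcc_subset_Icc hm (right_mem_Icc.2 hab)).trans hsub)
  have hleft := taylor_integral_remainder_two hs hf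
    ((uIcc_subset_Icc hm (left_mem_Icc.2 hab)).trans hsub)
  -- the second-order terms cancel because `a - m = -(b - m)`
  have hdefect : f b - f a - (b - a) • derivWithin f s m =
      (∫ t in m..b, ((b - t) ^ 2 / 2) • f₃ t) - ∫ t in m..a, ((a - t) ^ 2 / 2) • f₃ t := by
    rw [← hright, ← hleft, show a - m = -(b - m) by ring, show b - a = 2 * (b - m) by ring]
    module
  have hkernel_right : ‖∫ t in m..b, ((b - t) ^ 2 / 2) • f₃ t‖ ≤
      (b - a) ^ 2 / 8 * ∫ t in m..b, ‖f₃ t‖ := by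
    refine norm_intervalIntegral_smul_le hmb (fun t ht ↦ ?_) (hint hm (right_mem_Icc.2 hab))
    rw [abs_of_nonneg (by positivity)]
    nlinarith [ht.1, ht.2, hm_def]
  have hkernel_left : ‖∫ t in m..a, ((a - t) ^ 2 / 2) • f₃ t‖ ≤
      (b - a) ^ 2 / 8 * ∫ t in a..m, ‖f₃ t‖ := by
    rw [intervalIntegral.integral_symm, norm_neg]
    refine norm_intervalIntegral_smul_le ham (fun t ht ↦ ?_) (hint (left_mem_Icc.2 hab) hm)
    rw [abs_of_nonneg (by positivity)]
    nlinarith [ht.1, ht.2, hm_def]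
  calc ‖f b - f a - (b - a) • derivWithin f s m‖
      ≤ ‖∫ t in m..b, ((b - t) ^ 2 / 2) • f₃ t‖ + ‖∫ t in m..a, ((a - t) ^ 2 / 2) • f₃ t‖ := by
        rw [hdefect]; exact norm_sub_le _ _
    _ ≤ (b - a) ^ 2 / 8 * (∫ t in m..b, ‖f₃ t‖) + (b - a) ^ 2 / 8 * ∫ t in a..m, ‖f₃ t‖ :=
        add_le_add hkernel_right hkernel_left
    _ = (b - a) ^ 2 / 8 * ∫ t in a..b, ‖f₃ t‖ := by
        rw [← mul_add, add_comm, intervalIntegral.integral_add_adjacent_intervals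
          (hint (left_mem_Icc.2 hab) hm) (hint hm (right_mem_Icc.2 hab))]

theorem mul_norm_sq_midpoint_defect_le [CompleteSpace E] {f : ℝ → E} {s : Set ℝ}
    (hs : UniqueDiffOn ℝ s) (hf : ContDiffOn ℝ 3 f s) {a b : ℝ} (hab : a < b)
    (hsub : Icc a b ⊆ s) :
    (b - a) * ‖(b - a)⁻¹ • (f b - f a) - derivWithin f s ((a + b) / 2)‖ ^ 2 ≤
      (b - a) ^ 4 / 64 * ∫ t in a..b, ‖iteratedDerivWithin 3 f s t‖ ^ 2 := by
  set τ := b - a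
  set R := ‖τ⁻¹ • (f b - f a) - derivWithin f s ((a + b) / 2)‖
  set J := ∫ t in a..b, ‖iteratedDerivWithin 3 f s t‖
  set K := ∫ t in a..b, ‖iteratedDerivWithin 3 f s t‖ ^ 2
  have hτ : 0 < τ := sub_pos.2 hab
  have hcont : ContinuousOn (fun t ↦ ‖iteratedDerivWithin 3 f s t‖) (uIcc a b) :=
    (hf.continuousOn_iteratedDerivWithin le_rfl hs).norm.mono ((uIcc_of_le hab.le).le.trans hsub)
  have hτR : τ * R ≤ τ ^ 2 / 8 * J := by
    have hscale : τ * R = ‖τ • (τ⁻¹ • (f b - f a) - derivWithin f s ((a + b) / 2))‖ := by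
      rw [norm_smul, Real.norm_of_nonneg hτ.le]
    rw [hscale, smul_sub, smul_inv_smul₀ hτ.ne']
    exact norm_sub_sub_smul_derivWithin_midpoint_le hs hf hab.le hsub
  have hCS : J ^ 2 ≤ τ * K :=
    sq_intervalIntegral_le_mul hab.le hcont.intervalIntegrable (hcont.pow 2).intervalIntegrable
  calc τ * R ^ 2 = (τ * R) ^ 2 / τ := by field_simp
    _ ≤ (τ ^ 2 / 8 * J) ^ 2 / τ := by gcongr
    _ = τ ^ 3 / 64 * J ^ 2 := by field_simp; ring
    _ ≤ τ ^ 3 / 64 * (τ * K) := by gcongr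
    _ = τ ^ 4 / 64 * K := by ring

theorem sum_intervalIntegral_uniform_partition {g : ℝ → E} {τ : ℝ} {N : ℕ}
    (hg : ∀ n < N, IntervalIntegrable g volume (n * τ) ((n + 1) * τ)) :
    ∑ n ∈ Finset.range N, ∫ t in (n : ℝ) * τ..(n + 1) * τ, g t = ∫ t in (0 : ℝ)..N * τ, g t := by
  have h := intervalIntegral.sum_integral_adjacent_intervals
    (a := fun n : ℕ ↦ (n : ℝ) * τ) (μ := volume) (f := g) fun n hn ↦ by
      push_cast
      exact hg n hn
  push_cast at h
  simpa using h

end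

theorem stmt_7_general {E : Type*} [NormedAddCommGroup E] [NormedSpace ℝ E] [CompleteSpace E]
    (τ : ℝ) (hτ : 0 < τ) (N : ℕ) (T : ℝ) (hT : T = N * τ)
    (f : ℝ → E) (hf : ContDiffOn ℝ 3 f (Set.Icc 0 T)) :
    ∑ n ∈ Finset.range N,
        τ * ‖τ⁻¹ • (f ((n + 1) * τ) - f (n * τ)) -
              derivWithin f (Set.Icc 0 T) ((n + 1 / 2) * τ)‖ ^ 2 ≤
      τ ^ 4 / 64 * ∫ s in (0 : ℝ)..T, ‖iteratedDerivWithin 3 f (Set.Icc 0 T) s‖ ^ 2 := by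
  set S := Icc (0 : ℝ) T
  have hpiece : ∀ n < N, UniqueDiffOn ℝ S ∧ Icc ((n : ℝ) * τ) ((n + 1) * τ) ⊆ S := by
    intro n hn
    have hnN : (n : ℝ) + 1 ≤ N := by exact_mod_cast hn
    refine ⟨uniqueDiffOn_Icc (by rw [hT]; nlinarith), Icc_subset_Icc (by positivity) ?_⟩
    rw [hT]; nlinarith
  have hcell : ∀ n < N,
      τ * ‖τ⁻¹ • (f ((n + 1) * τ) - f (n * τ)) - derivWithin f S ((n + 1 / 2) * τ)‖ ^ 2 ≤
        τ ^ 4 / 64 * ∫ t in (n : ℝ) * τ..(n + 1) * τ, ‖iteratedDerivWithin 3 f S t‖ ^ 2 := by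
    intro n hn
    obtain ⟨hS, hsub⟩ := hpiece n hn
    have h := mul_norm_sq_midpoint_defect_le hS hf (by nlinarith) hsub
    rwa [show ((n : ℝ) + 1) * τ - n * τ = τ by ring,
      show ((n : ℝ) * τ + (n + 1) * τ) / 2 = (n + 1 / 2) * τ by ring] at h
  have hint : ∀ n < N, IntervalIntegrable (fun t ↦ ‖iteratedDerivWithin 3 f S t‖ ^ 2) volume
      ((n : ℝ) * τ) ((n + 1) * τ) := by
    intro n hn
    obtain ⟨hS, hsub⟩ := hpiece n hn
    have hcont := (hf.continuousOn_iteratedDerivWithin le_rfl hS).norm.pow 2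
    exact (hcont.mono ((uIcc_of_le (by nlinarith)).le.trans hsub)).intervalIntegrable
  calc _ ≤ ∑ n ∈ Finset.range N,
        τ ^ 4 / 64 * ∫ t in (n : ℝ) * τ..(n + 1) * τ, ‖iteratedDerivWithin 3 f S t‖ ^ 2 :=
        Finset.sum_le_sum fun n hn ↦ hcell n (Finset.mem_range.1 hn)
    _ = _ := by rw [← Finset.mul_sum, sum_intervalIntegral_uniform_partition hint, hT]

theorem stmt_7 {E : Type*} [NormedAddCommGroup E] [NormedSpace ℝ E] [CompleteSpace E]
    (τ : ℝ) (hτ : 0 < τ) (N : ℕ) (hN : 1 ≤ N) (T : ℝ) (hT : T = N * τ)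
    (f : ℝ → E) (hf : ContDiffOn ℝ 3 f (Set.Icc 0 T)) :
    ∑ n ∈ Finset.range N,
        τ * ‖τ⁻¹ • (f ((n + 1) * τ) - f (n * τ)) -
              derivWithin f (Set.Icc 0 T) ((n + 1 / 2) * τ)‖ ^ 2 ≤
      τ ^ 4 / 64 * ∫ s in (0 : ℝ)..T, ‖iteratedDerivWithin 3 f (Set.Icc 0 T) s‖ ^ 2 :=
  stmt_7_general τ hτ N T hT f hf
end

section
/- Let E be a real Banach space, let τ > 0, N ≥ 1, T = Nτ, set t_n = nτ and t_{n+1/2} = (n + 1/2)τ, and let f : ℝ → E be twice continuously differentiable on [0, T]. Then ∑_{n=0}^{N−1} τ ‖ (f(t_n) + f(t_{n+1}))/2 − f(t_{n+1/2}) ‖² ≤ (τ⁴/16) · ∫_0^T ‖f''(s)‖² ds. -/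
/-!
On a cell `[a, b]` with midpoint `m` and half-width `h`, the function `φ t = f (m + t) + f (m - t)`
has `φ' t = f' (m + t) - f' (m - t)`, whose norm is at most `∫ₐᵇ ‖f''‖` by the fundamental theorem
of calculus. The mean value inequality then gives `‖f a + f b - 2 f m‖ ≤ h ∫ₐᵇ ‖f''‖`, and
Cauchy–Schwarz, `(∫ₐᵇ ‖f''‖)² ≤ (b - a) ∫ₐᵇ ‖f''‖²`, turns this into `(b - a)³ / 16 ∫ₐᵇ ‖f''‖²`
for the squared midpoint error. Summing over the cells of the uniform partition gives the claim.
-/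

open MeasureTheory Set

theorem sq_intervalIntegral_le_mul_integral_sq {g : ℝ → ℝ} {a b : ℝ} (hab : a ≤ b)
    (hg : IntervalIntegrable g volume a b) (hg2 : IntervalIntegrable (fun x ↦ g x ^ 2) volume a b) :
    (∫ x in a..b, g x) ^ 2 ≤ (b - a) * ∫ x in a..b, g x ^ 2 := by
  rcases hab.eq_or_lt with rfl | hlt
  · simp
  have hvol : volume.real (Ioc a b) = b - a := Real.volume_real_Ioc_of_le hab
  have jensen := (even_two.convexOn_pow : ConvexOn ℝ univ fun x : ℝ ↦ x ^ 2).map_set_average_le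
    (continuous_pow 2).continuousOn isClosed_univ (by simp [hlt]) (by simp)
    (ae_of_all _ fun _ ↦ mem_univ _) hg.1 hg2.1
  simp only [setAverage_eq, hvol, smul_eq_mul,
    ← intervalIntegral.integral_of_le hab] at jensen
  have hL : 0 < b - a := sub_pos.2 hlt
  rw [mul_pow, inv_pow, ← div_eq_inv_mul, ← div_eq_inv_mul,
    div_le_div_iff₀ (by positivity) hL] at jensen
  nlinarith

section

variable {E : Type*} [NormedAddCommGroup E] [NormedSpace ℝ E]

theorem norm_sub_le_integral_norm_derivWithin [CompleteSpace E] {g : ℝ → E} {S : Set ℝ}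
    (hS : UniqueDiffOn ℝ S) (hg : ContDiffOn ℝ 1 g S) {x y : ℝ} (hxy : x ≤ y)
    (hsub : Icc x y ⊆ S) :
    ‖g y - g x‖ ≤ ∫ t in x..y, ‖derivWithin g S t‖ := by
  have hderiv : ∀ t ∈ Ioo x y, HasDerivAt g (derivWithin g S t) t := fun t ht ↦
    (hg.differentiableOn one_ne_zero t (hsub (Ioo_subset_Icc_self ht))).hasDerivWithinAt.hasDerivAt
      (Filter.mem_of_superset (Icc_mem_nhds ht.1 ht.2) hsub)
  rw [← intervalIntegral.integral_eq_sub_of_hasDerivAt_of_le hxy (hg.continuousOn.mono hsub) hderiv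
    (((hg.continuousOn_derivWithin hS le_rfl).mono hsub).intervalIntegrable_of_Icc hxy)]
  exact intervalIntegral.norm_integral_le_integral_norm hxy

theorem iteratedDerivWithin_two_eq (f : ℝ → E) (S : Set ℝ) :
    iteratedDerivWithin 2 f S = derivWithin (derivWithin f S) S := by
  rw [iteratedDerivWithin_succ', iteratedDerivWithin_one]

variable [CompleteSpace E] {f : ℝ → E} {S : Set ℝ}

theorem norm_add_sub_two_smul_midpoint_le (hS : UniqueDiffOn ℝ S) (hf : ContDiffOn ℝ 2 f S)
    {a b : ℝ} (hab : a ≤ b) (hsub : Icc a b ⊆ S) :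
    ‖f a + f b - (2 : ℝ) • f ((a + b) / 2)‖ ≤
      (b - a) / 2 * ∫ s in a..b, ‖iteratedDerivWithin 2 f S s‖ := by
  set m := (a + b) / 2 with hm
  set h := (b - a) / 2 with hh
  set C := ∫ s in a..b, ‖iteratedDerivWithin 2 f S s‖
  have hf' : ContDiffOn ℝ 1 (derivWithin f S) S := hf.derivWithin hS le_rfl
  have hmem : ∀ t ∈ Icc 0 h, m + t ∈ Icc a b ∧ m - t ∈ Icc a b := fun t ⟨ht0, hth⟩ ↦
    ⟨⟨by linarith, by linarith⟩, ⟨by linarith, by linarith⟩⟩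
  have hderiv : ∀ t ∈ Icc 0 h, HasDerivWithinAt (fun t ↦ f (m + t) + f (m - t))
      (derivWithin f S (m + t) - derivWithin f S (m - t)) (Icc 0 h) t := by
    intro t ht
    have hdiff : ∀ x ∈ Icc a b, HasDerivWithinAt f (derivWithin f S x) S x := fun x hx ↦
      (hf.differentiableOn two_ne_zero x (hsub hx)).hasDerivWithinAt
    have hplus := (hdiff _ (hmem t ht).1).scomp t ((hasDerivWithinAt_id t _).const_add m)
      fun s hs ↦ hsub (hmem s hs).1
    have hminus := (hdiff _ (hmem t ht).2).scomp t ((hasDerivWithinAt_id t _).const_sub m)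
      fun s hs ↦ hsub (hmem s hs).2
    have hsum := hplus.add hminus
    simp only [Function.comp_def, one_smul, neg_smul, ← sub_eq_add_neg] at hsum
    exact hsum
  have hbound : ∀ t ∈ Ico 0 h, ‖derivWithin f S (m + t) - derivWithin f S (m - t)‖ ≤ C := by
    intro t ht
    obtain ⟨⟨-, hplus⟩, ⟨hminus, -⟩⟩ := hmem t (Ico_subset_Icc_self ht)
    have hle : m - t ≤ m + t := by linarith [ht.1]
    calc ‖derivWithin f S (m + t) - derivWithin f S (m - t)‖
        ≤ ∫ s in m - t..m + t, ‖iteratedDerivWithin 2 f S s‖ := by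
          rw [iteratedDerivWithin_two_eq]
          exact norm_sub_le_integral_norm_derivWithin hS hf' hle
            ((Icc_subset_Icc hminus hplus).trans hsub)
      _ ≤ C := intervalIntegral.integral_mono_interval hminus hle hplus
          (ae_of_all _ fun _ ↦ norm_nonneg _)
          (((hf.continuousOn_iteratedDerivWithin le_rfl hS).mono hsub).norm.intervalIntegrable_of_Icc
            hab)
  have hmvt := norm_image_sub_le_of_norm_deriv_le_segment' hderiv hbound h
    ⟨by linarith [hh], le_rfl⟩
  have hb : m + h = b := by ring
  have ha : m - h = a := by ring
  rw [hb, ha, add_zero, sub_zero, sub_zero, add_comm (f b), ← two_smul ℝ, mul_comm] at hmvt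
  exact hmvt

theorem sq_norm_midpoint_average_sub_le (hS : UniqueDiffOn ℝ S) (hf : ContDiffOn ℝ 2 f S)
    {a b : ℝ} (hab : a ≤ b) (hsub : Icc a b ⊆ S) :
    ‖(2 : ℝ)⁻¹ • (f a + f b) - f ((a + b) / 2)‖ ^ 2 ≤
      (b - a) ^ 3 / 16 * ∫ s in a..b, ‖iteratedDerivWithin 2 f S s‖ ^ 2 := by
  have hcont : ContinuousOn (fun s ↦ ‖iteratedDerivWithin 2 f S s‖) (Icc a b) :=
    ((hf.continuousOn_iteratedDerivWithin le_rfl hS).mono hsub).norm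
  set C := ∫ s in a..b, ‖iteratedDerivWithin 2 f S s‖
  have hC : 0 ≤ C := intervalIntegral.integral_nonneg hab fun _ _ ↦ norm_nonneg _
  have hnorm : ‖(2 : ℝ)⁻¹ • (f a + f b) - f ((a + b) / 2)‖ ≤ (b - a) / 4 * C := by
    have hsmul : (2 : ℝ)⁻¹ • (f a + f b) - f ((a + b) / 2) =
        (2 : ℝ)⁻¹ • (f a + f b - (2 : ℝ) • f ((a + b) / 2)) := by module
    rw [hsmul, norm_smul, Real.norm_of_nonneg (by norm_num)]
    linarith [norm_add_sub_two_smul_midpoint_le hS hf hab hsub]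
  have hCS : C ^ 2 ≤ (b - a) * ∫ s in a..b, ‖iteratedDerivWithin 2 f S s‖ ^ 2 :=
    sq_intervalIntegral_le_mul_integral_sq hab (hcont.intervalIntegrable_of_Icc hab)
      ((hcont.pow 2).intervalIntegrable_of_Icc hab)
  calc ‖(2 : ℝ)⁻¹ • (f a + f b) - f ((a + b) / 2)‖ ^ 2
      ≤ ((b - a) / 4 * C) ^ 2 := pow_le_pow_left₀ (norm_nonneg _) hnorm 2
    _ = (b - a) ^ 2 / 16 * C ^ 2 := by ring
    _ ≤ (b - a) ^ 2 / 16 * ((b - a) * ∫ s in a..b, ‖iteratedDerivWithin 2 f S s‖ ^ 2) := by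
      gcongr
    _ = (b - a) ^ 3 / 16 * ∫ s in a..b, ‖iteratedDerivWithin 2 f S s‖ ^ 2 := by ring

theorem sum_sq_norm_midpoint_average_sub_le (hS : UniqueDiffOn ℝ S) (hf : ContDiffOn ℝ 2 f S)
    {τ : ℝ} (hτ : 0 ≤ τ) {N : ℕ} (hsub : Icc 0 (N * τ) ⊆ S) :
    ∑ n ∈ Finset.range N,
        τ * ‖(2 : ℝ)⁻¹ • (f (n * τ) + f ((n + 1) * τ)) - f ((n + 1 / 2) * τ)‖ ^ 2 ≤
      τ ^ 4 / 16 * ∫ s in (0 : ℝ)..N * τ, ‖iteratedDerivWithin 2 f S s‖ ^ 2 := by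
  have hcell : ∀ n < N, Icc ((n : ℝ) * τ) ((n + 1) * τ) ⊆ S := fun n hn ↦
    (Icc_subset_Icc (by positivity) (by gcongr; exact_mod_cast hn)).trans hsub
  have hint : ∀ n < N, IntervalIntegrable (fun s ↦ ‖iteratedDerivWithin 2 f S s‖ ^ 2) volume
      ((n : ℝ) * τ) (((n + 1 : ℕ) : ℝ) * τ) := fun n hn ↦ by
    push_cast
    exact (((hf.continuousOn_iteratedDerivWithin le_rfl hS).mono (hcell n hn)).norm.pow 2
      ).intervalIntegrable_of_Icc (by gcongr; linarith)
  have hsplit := intervalIntegral.sum_integral_adjacent_intervals hint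
  rw [Nat.cast_zero, zero_mul] at hsplit
  push_cast at hsplit
  rw [← hsplit, Finset.mul_sum]
  refine Finset.sum_le_sum fun n hn ↦ ?_
  have hcell_le : (n : ℝ) * τ ≤ (n + 1) * τ := by gcongr; linarith
  have hlocal := sq_norm_midpoint_average_sub_le hS hf hcell_le
    (hcell n (Finset.mem_range.1 hn))
  rw [show ((n : ℝ) * τ + (n + 1) * τ) / 2 = (n + 1 / 2) * τ by ring,
    show ((n : ℝ) + 1) * τ - n * τ = τ by ring] at hlocal
  calc τ * ‖(2 : ℝ)⁻¹ • (f (n * τ) + f ((n + 1) * τ)) - f ((n + 1 / 2) * τ)‖ ^ 2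
      ≤ τ * (τ ^ 3 / 16 * ∫ s in n * τ..(n + 1) * τ, ‖iteratedDerivWithin 2 f S s‖ ^ 2) :=
        mul_le_mul_of_nonneg_left hlocal hτ
    _ = _ := by ring

end

theorem stmt_8 {E : Type*} [NormedAddCommGroup E] [NormedSpace ℝ E] [CompleteSpace E]
    (τ : ℝ) (hτ : 0 < τ) (N : ℕ) (hN : 1 ≤ N) (T : ℝ) (hT : T = N * τ)
    (f : ℝ → E) (hf : ContDiffOn ℝ 2 f (Set.Icc 0 T)) :
    ∑ n ∈ Finset.range N,
        τ * ‖(2 : ℝ)⁻¹ • (f (n * τ) + f ((n + 1) * τ)) - f ((n + 1 / 2) * τ)‖ ^ 2 ≤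
      τ ^ 4 / 16 * ∫ s in (0 : ℝ)..T, ‖iteratedDerivWithin 2 f (Set.Icc 0 T) s‖ ^ 2 := by
  have hT0 : 0 < T := hT ▸ mul_pos (by exact_mod_cast hN) hτ
  subst hT
  exact sum_sq_norm_midpoint_average_sub_le (uniqueDiffOn_Icc hT0) hf hτ.le subset_rfl
end

section
/- Let E be a real Banach space, let τ > 0, N ≥ 2, T = Nτ, set t_n = nτ and t_{n+1/2} = (n + 1/2)τ, and let f : ℝ → E be twice continuously differentiable on [0, T]. Then ∑_{n=1}^{N−2} τ ‖ (3f(t_n) − f(t_{n−1}))/2 − f(t_{n+1/2}) ‖² ≤ (τ⁴/4) · ∫_0^T ‖f''(s)‖² ds. -/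
/-!
The extrapolation error `(3 f(a + τ) - f(a)) / 2 - f(a + 3τ/2)` is a linear functional of `f`
vanishing on affine functions, so Taylor's formula with integral remainder around `a + 3τ/2`
writes it as `∫ K f''` over `[a, a + 3τ/2]` with a piecewise linear Peano kernel `K` satisfying
`∫ K² = τ³/8`. Cauchy–Schwarz bounds the squared error by `τ³/8 · ∫ ‖f''‖²`. Enlarging each
interval to the window `[t_{n-1}, t_{n+1}]`, and using that these windows cover `[0, T]` at most
twice, the sum is at most `τ⁴/4 · ∫_0^T ‖f''‖²`.
-/

open MeasureTheory Set

theorem sq_intervalIntegral_mul_le {u v : ℝ → ℝ} {a b : ℝ} (hab : a ≤ b)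
    (hu : ContinuousOn u (Icc a b)) (hv : ContinuousOn v (Icc a b)) :
    (∫ s in a..b, u s * v s) ^ 2 ≤ (∫ s in a..b, u s ^ 2) * ∫ s in a..b, v s ^ 2 := by
  have hint : ∀ {w : ℝ → ℝ}, ContinuousOn w (Icc a b) → IntervalIntegrable w volume a b :=
    fun hw => (uIcc_of_le hab ▸ hw).intervalIntegrable
  have hquad : ∀ t : ℝ, 0 ≤ (∫ s in a..b, u s ^ 2) * (t * t) + (-2 * ∫ s in a..b, u s * v s) * t
      + ∫ s in a..b, v s ^ 2 := by
    intro t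
    have hnonneg : 0 ≤ ∫ s in a..b, (t * u s - v s) ^ 2 :=
      intervalIntegral.integral_nonneg hab fun s _ => sq_nonneg _
    have hexpand : ∫ s in a..b, (t * u s - v s) ^ 2
        = ∫ s in a..b, ((t * t) * u s ^ 2 - (2 * t) * (u s * v s) + v s ^ 2) := by
      congr 1; ext s; ring
    rw [hexpand, intervalIntegral.integral_add, intervalIntegral.integral_sub,
      intervalIntegral.integral_const_mul, intervalIntegral.integral_const_mul] at hnonneg
    · linarith
    all_goals exact hint (by fun_prop)
  have := discrim_le_zero hquad
  rw [discrim] at this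
  linarith

theorem norm_intervalIntegral_smul_sq_le {E : Type*} [NormedAddCommGroup E] [NormedSpace ℝ E]
    {K : ℝ → ℝ} {g : ℝ → E} {a b : ℝ} (hab : a ≤ b)
    (hK : ContinuousOn K (Icc a b)) (hg : ContinuousOn g (Icc a b)) :
    ‖∫ s in a..b, K s • g s‖ ^ 2 ≤ (∫ s in a..b, K s ^ 2) * ∫ s in a..b, ‖g s‖ ^ 2 := by
  have hnorm : ‖∫ s in a..b, K s • g s‖ ≤ ∫ s in a..b, |K s| * ‖g s‖ := by
    simpa only [norm_smul, Real.norm_eq_abs] using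
      intervalIntegral.norm_integral_le_integral_norm (f := fun s => K s • g s) hab
  calc ‖∫ s in a..b, K s • g s‖ ^ 2 ≤ (∫ s in a..b, |K s| * ‖g s‖) ^ 2 :=
        pow_le_pow_left₀ (norm_nonneg _) hnorm 2
    _ ≤ (∫ s in a..b, |K s| ^ 2) * ∫ s in a..b, ‖g s‖ ^ 2 :=
        sq_intervalIntegral_mul_le hab hK.abs hg.norm
    _ = (∫ s in a..b, K s ^ 2) * ∫ s in a..b, ‖g s‖ ^ 2 := by simp only [sq_abs]

section

variable {E : Type*} [NormedAddCommGroup E] [NormedSpace ℝ E] {f : ℝ → E} {A B : ℝ}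

theorem ContDiffOn.continuousOn_iteratedDerivWithin_Icc {k : WithTop ℕ∞} {n : ℕ}
    (hf : ContDiffOn ℝ k f (Icc A B)) (hn : n ≤ k) :
    ContinuousOn (iteratedDerivWithin n f (Icc A B)) (Icc A B) := by
  rcases lt_or_ge A B with hAB | hBA
  · exact hf.continuousOn_iteratedDerivWithin hn (uniqueDiffOn_Icc hAB)
  · exact (subsingleton_Icc_of_ge hBA).continuousOn _

theorem ContDiffOn.hasDerivAt_iteratedDerivWithin_Icc {k : WithTop ℕ∞} {n : ℕ}
    (hf : ContDiffOn ℝ k f (Icc A B)) (hn : n < k) {s : ℝ} (hs : s ∈ Ioo A B) :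
    HasDerivAt (iteratedDerivWithin n f (Icc A B))
      (iteratedDerivWithin (n + 1) f (Icc A B) s) s := by
  have hdiff := hf.differentiableOn_iteratedDerivWithin hn
    (uniqueDiffOn_Icc (hs.1.trans hs.2)) s (Ioo_subset_Icc_self hs)
  rw [iteratedDerivWithin_succ]
  exact hdiff.hasDerivWithinAt.hasDerivAt (Icc_mem_nhds hs.1 hs.2)

variable [CompleteSpace E]

theorem ContDiffOn.taylor_integral_remainder_Icc (hf : ContDiffOn ℝ 2 f (Icc A B)) {x m : ℝ}
    (hAx : A ≤ x) (hxm : x ≤ m) (hmB : m ≤ B) :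
    f x - f m - (x - m) • iteratedDerivWithin 1 f (Icc A B) m
      = ∫ s in x..m, (s - x) • iteratedDerivWithin 2 f (Icc A B) s := by
  have hsub : Icc x m ⊆ Icc A B := Icc_subset_Icc hAx hmB
  set f₁ := iteratedDerivWithin 1 f (Icc A B)
  set f₂ := iteratedDerivWithin 2 f (Icc A B)
  have hf₁ : ContinuousOn f₁ (Icc x m) :=
    (hf.continuousOn_iteratedDerivWithin_Icc (by norm_num)).mono hsub
  have hf₂ : ContinuousOn f₂ (Icc x m) :=
    (hf.continuousOn_iteratedDerivWithin_Icc le_rfl).mono hsub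
  have hdf : ∀ s ∈ Ioo x m, HasDerivAt f (f₁ s) s := fun s hs => by
    simpa only [iteratedDerivWithin_zero, zero_add] using
      hf.hasDerivAt_iteratedDerivWithin_Icc (n := 0) (by norm_num) (Ioo_subset_Ioo hAx hmB hs)
  have hdf₁ : ∀ s ∈ Ioo x m, HasDerivAt f₁ (f₂ s) s := fun s hs =>
    hf.hasDerivAt_iteratedDerivWithin_Icc (n := 1) (by norm_num) (Ioo_subset_Ioo hAx hmB hs)
  have hftc := intervalIntegral.integral_eq_sub_of_hasDerivAt_of_le hxm
    (f := fun s => f s + (x - s) • f₁ s) (f' := fun s => (x - s) • f₂ s)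
    ((hf.continuousOn.mono hsub).add ((continuousOn_const.sub continuousOn_id).smul hf₁))
    (fun s hs => ((hdf s hs).add (((hasDerivAt_id' s).const_sub x).smul (hdf₁ s hs)))
      |>.congr_deriv (by module))
    (((continuousOn_const.sub continuousOn_id).smul hf₂).intervalIntegrable_of_Icc hxm)
  have hneg : ∫ s in x..m, (s - x) • f₂ s = -∫ s in x..m, (x - s) • f₂ s := by
    rw [← intervalIntegral.integral_neg]
    congr 1; ext s; rw [← neg_smul, neg_sub]
  rw [hneg, hftc]
  simp only [sub_self, zero_smul, add_zero]
  module

theorem ContDiffOn.taylor_integral_remainder_truncatedPower (hf : ContDiffOn ℝ 2 f (Icc A B))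
    {a x m : ℝ} (hAa : A ≤ a) (hax : a ≤ x) (hxm : x ≤ m) (hmB : m ≤ B) :
    f x - f m - (x - m) • iteratedDerivWithin 1 f (Icc A B) m
      = ∫ s in a..m, max (s - x) 0 • iteratedDerivWithin 2 f (Icc A B) s := by
  have hint : ∀ {c d : ℝ}, A ≤ c → c ≤ d → d ≤ B → IntervalIntegrable
      (fun s => max (s - x) 0 • iteratedDerivWithin 2 f (Icc A B) s) volume c d :=
    fun hAc hcd hdB => ContinuousOn.intervalIntegrable_of_Icc hcd <|
      (by fun_prop : Continuous fun s : ℝ => max (s - x) 0).continuousOn.smul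
        ((hf.continuousOn_iteratedDerivWithin_Icc le_rfl).mono (Icc_subset_Icc hAc hdB))
  have hleft : ∫ s in a..x, max (s - x) 0 • iteratedDerivWithin 2 f (Icc A B) s = 0 := by
    refine (intervalIntegral.integral_congr fun s hs => ?_).trans intervalIntegral.integral_zero
    rw [uIcc_of_le hax] at hs
    simp [hs.2]
  have hright : ∫ s in x..m, max (s - x) 0 • iteratedDerivWithin 2 f (Icc A B) s
      = ∫ s in x..m, (s - x) • iteratedDerivWithin 2 f (Icc A B) s := by
    refine intervalIntegral.integral_congr fun s hs => ?_
    rw [uIcc_of_le hxm] at hs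
    simp [hs.1]
  rw [hf.taylor_integral_remainder_Icc (hAa.trans hax) hxm hmB,
    ← intervalIntegral.integral_add_adjacent_intervals (hint hAa hax (hxm.trans hmB))
      (hint (hAa.trans hax) hxm hmB), hleft, hright, zero_add]

noncomputable def extrapolationKernel (a τ s : ℝ) : ℝ :=
  3 / 2 * max (s - (a + τ)) 0 - 1 / 2 * max (s - a) 0

theorem continuous_extrapolationKernel (a τ : ℝ) : Continuous (extrapolationKernel a τ) := by
  unfold extrapolationKernel; fun_prop

theorem integral_extrapolationKernel_sq (a : ℝ) {τ : ℝ} (hτ : 0 ≤ τ) :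
    ∫ s in a..a + 3 / 2 * τ, extrapolationKernel a τ s ^ 2 = τ ^ 3 / 8 := by
  have hint : ∀ c d : ℝ, IntervalIntegrable (fun s => extrapolationKernel a τ s ^ 2) volume c d :=
    fun c d => ((continuous_extrapolationKernel a τ).pow 2).intervalIntegrable c d
  have hleft : ∫ s in a..a + τ, extrapolationKernel a τ s ^ 2
      = ∫ s in a..a + τ, (s - a) ^ 2 / 4 := by
    refine intervalIntegral.integral_congr fun s hs => ?_
    rw [uIcc_of_le (by linarith)] at hs
    simp only [extrapolationKernel, max_eq_right (by linarith [hs.2] : s - (a + τ) ≤ 0),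
      max_eq_left (by linarith [hs.1] : 0 ≤ s - a)]
    ring
  have hright : ∫ s in a + τ..a + 3 / 2 * τ, extrapolationKernel a τ s ^ 2
      = ∫ s in a + τ..a + 3 / 2 * τ, (s - (a + 3 / 2 * τ)) ^ 2 := by
    refine intervalIntegral.integral_congr fun s hs => ?_
    rw [uIcc_of_le (by linarith)] at hs
    simp only [extrapolationKernel, max_eq_left (by linarith [hs.1] : 0 ≤ s - (a + τ)),
      max_eq_left (by linarith [hs.1] : 0 ≤ s - a)]
    ring
  rw [← intervalIntegral.integral_add_adjacent_intervals (hint a (a + τ)) (hint _ _), hleft,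
    hright, intervalIntegral.integral_div, intervalIntegral.integral_comp_sub_right (· ^ 2),
    intervalIntegral.integral_comp_sub_right (· ^ 2), integral_pow, integral_pow]
  ring

theorem ContDiffOn.extrapolation_error_eq_integral (hf : ContDiffOn ℝ 2 f (Icc A B)) {a τ : ℝ}
    (hτ : 0 ≤ τ) (hAa : A ≤ a) (hB : a + 3 / 2 * τ ≤ B) :
    (2 : ℝ)⁻¹ • ((3 : ℝ) • f (a + τ) - f a) - f (a + 3 / 2 * τ)
      = ∫ s in a..a + 3 / 2 * τ,
          extrapolationKernel a τ s • iteratedDerivWithin 2 f (Icc A B) s := by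
  set f₁ := iteratedDerivWithin 1 f (Icc A B)
  set f₂ := iteratedDerivWithin 2 f (Icc A B)
  have hint : ∀ x : ℝ,
      IntervalIntegrable (fun s => max (s - x) 0 • f₂ s) volume a (a + 3 / 2 * τ) :=
    fun x => ContinuousOn.intervalIntegrable_of_Icc (by linarith) <|
      (by fun_prop : Continuous fun s : ℝ => max (s - x) 0).continuousOn.smul
        ((hf.continuousOn_iteratedDerivWithin_Icc le_rfl).mono (Icc_subset_Icc hAa hB))
  calc (2 : ℝ)⁻¹ • ((3 : ℝ) • f (a + τ) - f a) - f (a + 3 / 2 * τ)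
      = (3 / 2 : ℝ) •
            (f (a + τ) - f (a + 3 / 2 * τ) - (a + τ - (a + 3 / 2 * τ)) • f₁ (a + 3 / 2 * τ))
          - (1 / 2 : ℝ) •
            (f a - f (a + 3 / 2 * τ) - (a - (a + 3 / 2 * τ)) • f₁ (a + 3 / 2 * τ)) := by
        module
    _ = (3 / 2 : ℝ) • (∫ s in a..a + 3 / 2 * τ, max (s - (a + τ)) 0 • f₂ s)
        - (1 / 2 : ℝ) • ∫ s in a..a + 3 / 2 * τ, max (s - a) 0 • f₂ s := by
        rw [hf.taylor_integral_remainder_truncatedPower hAa (by linarith) (by linarith) hB,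
          hf.taylor_integral_remainder_truncatedPower hAa le_rfl (by linarith) hB]
    _ = ∫ s in a..a + 3 / 2 * τ, extrapolationKernel a τ s • f₂ s := by
        rw [← intervalIntegral.integral_smul, ← intervalIntegral.integral_smul,
          ← intervalIntegral.integral_sub
            (f := fun s => (3 / 2 : ℝ) • max (s - (a + τ)) 0 • f₂ s)
            (g := fun s => (1 / 2 : ℝ) • max (s - a) 0 • f₂ s) ((hint _).smul _) ((hint _).smul _)]
        congr 1; ext s
        simp only [extrapolationKernel, sub_smul, mul_smul]

theorem ContDiffOn.norm_extrapolation_error_sq_le (hf : ContDiffOn ℝ 2 f (Icc A B)) {a τ : ℝ}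
    (hτ : 0 ≤ τ) (hAa : A ≤ a) (hB : a + 3 / 2 * τ ≤ B) :
    ‖(2 : ℝ)⁻¹ • ((3 : ℝ) • f (a + τ) - f a) - f (a + 3 / 2 * τ)‖ ^ 2
      ≤ τ ^ 3 / 8 * ∫ s in a..a + 3 / 2 * τ, ‖iteratedDerivWithin 2 f (Icc A B) s‖ ^ 2 := by
  rw [hf.extrapolation_error_eq_integral hτ hAa hB, ← integral_extrapolationKernel_sq a hτ]
  exact norm_intervalIntegral_smul_sq_le (by linarith)
    (continuous_extrapolationKernel a τ).continuousOn
    ((hf.continuousOn_iteratedDerivWithin_Icc le_rfl).mono (Icc_subset_Icc hAa hB))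

theorem ContDiffOn.norm_extrapolation_error_sq_le_two_steps (hf : ContDiffOn ℝ 2 f (Icc A B))
    {a τ : ℝ} (hτ : 0 ≤ τ) (hAa : A ≤ a) (hB : a + 2 * τ ≤ B) :
    ‖(2 : ℝ)⁻¹ • ((3 : ℝ) • f (a + τ) - f a) - f (a + 3 / 2 * τ)‖ ^ 2
      ≤ τ ^ 3 / 8 * ∫ s in a..a + 2 * τ, ‖iteratedDerivWithin 2 f (Icc A B) s‖ ^ 2 := by
  refine (hf.norm_extrapolation_error_sq_le hτ hAa (by linarith)).trans ?_
  gcongr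
  exact intervalIntegral.integral_mono_interval le_rfl (by linarith) (by linarith)
    (.of_forall fun s => sq_nonneg _)
    ((((hf.continuousOn_iteratedDerivWithin_Icc le_rfl).mono
      (Icc_subset_Icc hAa hB)).norm.pow 2).intervalIntegrable_of_Icc (by linarith))

end

theorem sum_integral_two_steps_le {g : ℝ → ℝ} {τ : ℝ} {k : ℕ} (hg0 : ∀ s, 0 ≤ g s)
    (hτ : 0 ≤ τ) (hg : IntervalIntegrable g volume 0 ((k + 2) * τ)) :
    ∑ i ∈ Finset.range k, ∫ s in i * τ..(i + 2) * τ, g s ≤ 2 * ∫ s in 0..(k + 2) * τ, g s := by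
  set F : ℕ → ℝ := fun i => ∫ s in i * τ..(i + 1) * τ, g s
  have hF0 : ∀ i, 0 ≤ F i := fun i =>
    intervalIntegral.integral_nonneg (by nlinarith) fun s _ => hg0 s
  have hint : ∀ i < k + 2, IntervalIntegrable g volume (i * τ) ((i + 1) * τ) := by
    intro i hi
    have hi' : (i : ℝ) + 1 ≤ k + 2 := by exact_mod_cast Nat.succ_le_of_lt hi
    have hi0 : (0 : ℝ) ≤ i * τ := by positivity
    refine hg.mono_set ?_
    rw [uIcc_of_le (by nlinarith), uIcc_of_le (by nlinarith)]
    exact Icc_subset_Icc hi0 (by nlinarith)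
  have hsplit : ∀ i ∈ Finset.range k, ∫ s in i * τ..(i + 2) * τ, g s = F i + F (i + 1) := by
    intro i hi
    rw [Finset.mem_range] at hi
    have h := intervalIntegral.integral_add_adjacent_intervals (hint i (by omega))
      (by simpa [add_assoc, one_add_one_eq_two] using hint (i + 1) (by omega))
    simp only [F, Nat.cast_add, Nat.cast_one, add_assoc, one_add_one_eq_two] at h ⊢
    exact h.symm
  have htotal : ∑ i ∈ Finset.range (k + 2), F i = ∫ s in 0..(k + 2) * τ, g s := by
    have h := intervalIntegral.sum_integral_adjacent_intervals
      (a := fun i : ℕ => (i : ℝ) * τ) (fun i hi => by simpa using hint i hi)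
    push_cast at h
    simpa using h
  have hfirst : ∑ i ∈ Finset.range k, F i ≤ ∑ i ∈ Finset.range (k + 2), F i :=
    Finset.sum_le_sum_of_subset_of_nonneg (Finset.range_mono (by omega)) fun i _ _ => hF0 i
  have hsecond : ∑ i ∈ Finset.range k, F (i + 1) ≤ ∑ i ∈ Finset.range (k + 2), F i := by
    rw [Finset.sum_range_succ', Finset.sum_range_succ]
    linarith [hF0 0, hF0 (k + 1)]
  rw [Finset.sum_congr rfl hsplit, Finset.sum_add_distrib, ← htotal]
  linarith

theorem stmt_9 {E : Type*} [NormedAddCommGroup E] [NormedSpace ℝ E] [CompleteSpace E]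
    (τ : ℝ) (hτ : 0 < τ) (N : ℕ) (hN : 2 ≤ N) (T : ℝ) (hT : T = N * τ)
    (f : ℝ → E) (hf : ContDiffOn ℝ 2 f (Set.Icc 0 T)) :
    ∑ n ∈ Finset.Icc 1 (N - 2),
        τ * ‖(2 : ℝ)⁻¹ • ((3 : ℝ) • f (n * τ) - f ((n - 1 : ℕ) * τ)) -
              f ((n + 1 / 2) * τ)‖ ^ 2 ≤
      τ ^ 4 / 4 * ∫ s in (0 : ℝ)..T, ‖iteratedDerivWithin 2 f (Set.Icc 0 T) s‖ ^ 2 := by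
  set g := fun s => ‖iteratedDerivWithin 2 f (Icc 0 T) s‖ ^ 2
  have hNT : ((N - 2 : ℕ) + 2 : ℝ) * τ = T := by rw [Nat.cast_sub hN, hT]; ring
  have hg : IntervalIntegrable g volume 0 T :=
    ((hf.continuousOn_iteratedDerivWithin_Icc le_rfl).norm.pow 2).intervalIntegrable_of_Icc
      (by rw [hT]; positivity)
  have hterm : ∀ i ∈ Finset.range (N - 2),
      τ * ‖(2 : ℝ)⁻¹ • ((3 : ℝ) • f ((1 + i : ℕ) * τ) - f ((1 + i - 1 : ℕ) * τ)) -
        f (((1 + i : ℕ) + 1 / 2) * τ)‖ ^ 2 ≤ τ ^ 4 / 8 * ∫ s in i * τ..(i + 2) * τ, g s := by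
    intro i hi
    have hiN : (i : ℝ) + 2 ≤ N := by
      exact_mod_cast (by have := Finset.mem_range.1 hi; omega : i + 2 ≤ N)
    rw [show ((1 + i : ℕ) : ℝ) * τ = i * τ + τ by push_cast; ring, Nat.add_sub_cancel_left,
      show (((1 + i : ℕ) : ℝ) + 1 / 2) * τ = i * τ + 3 / 2 * τ by push_cast; ring,
      show ((i : ℝ) + 2) * τ = i * τ + 2 * τ by ring]
    calc _ ≤ τ * (τ ^ 3 / 8 * ∫ s in i * τ..i * τ + 2 * τ, g s) :=
          mul_le_mul_of_nonneg_left (hf.norm_extrapolation_error_sq_le_two_steps hτ.le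
            (by positivity) (by rw [hT]; nlinarith)) hτ.le
      _ = τ ^ 4 / 8 * ∫ s in i * τ..i * τ + 2 * τ, g s := by ring
  rw [← Finset.Ico_add_one_right_eq_Icc, Finset.sum_Ico_eq_sum_range, Nat.add_sub_cancel]
  calc _ ≤ ∑ i ∈ Finset.range (N - 2), τ ^ 4 / 8 * ∫ s in i * τ..(i + 2) * τ, g s :=
        Finset.sum_le_sum hterm
    _ = τ ^ 4 / 8 * ∑ i ∈ Finset.range (N - 2), ∫ s in i * τ..(i + 2) * τ, g s :=
        (Finset.mul_sum ..).symm
    _ ≤ τ ^ 4 / 8 * (2 * ∫ s in 0..((N - 2 : ℕ) + 2) * τ, g s) := by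
        gcongr
        exact sum_integral_two_steps_le (fun _ => sq_nonneg _) hτ.le (hNT ▸ hg)
    _ = τ ^ 4 / 4 * ∫ s in 0..T, g s := by rw [hNT]; ring
end
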